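/- On ℝ⁶ with coordinates (x, y, a, b, c, κ), define the smooth vector fields (on the open set where a ≠ 0): X(p) = (a, c, b, κ·a, (1+b·c)/a, 0) and Y₀(p) = (0, 0, 0, 0, 0, 1); for vector fields V, W define the Lie bracket [V, W](p) = DW(p)[V(p)] − DV(p)[W(p)], and set Y_{j+1} = [X, Y_j] for j = 0, 1, 2, 3. Then at every point p with a ≠ 0, the six vectors X(p), Y₀(p), Y₁(p), Y₂(p), Y₃(p), Y₄(p) span ℝ⁶. -/

import Mathlib

/-- The vector field `X = a∂x + c∂y + b∂a + κa∂b + ((1+bc)/a)∂c` on `ℝ⁶` with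
coordinates `(x, y, a, b, c, κ) = (p 0, …, p 5)`. -/
noncomputable def Xvf (p : Fin 6 → ℝ) : Fin 6 → ℝ :=
  ![p 2, p 4, p 3, p 5 * p 2, (1 + p 3 * p 4) / p 2, 0]

/-- Lie bracket of vector fields on `ℝ⁶`:
`[V, W](p) = DW(p)[V(p)] − DV(p)[W(p)]`. -/
noncomputable def lieBr (V W : (Fin 6 → ℝ) → Fin 6 → ℝ) : (Fin 6 → ℝ) → Fin 6 → ℝ :=
  fun p => fderiv ℝ W p (V p) - fderiv ℝ V p (W p)

/-- The iterated brackets `Y₀ = ∂κ`, `Y_{j+1} = [X, Y_j]`. -/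
noncomputable def Yvf : ℕ → (Fin 6 → ℝ) → Fin 6 → ℝ
  | 0 => fun _ => ![0, 0, 0, 0, 0, 1]
  | j + 1 => lieBr Xvf (Yvf j)

/-!
On `{a ≠ 0}` every `Yⱼ` agrees with an explicit field whose entries are polynomials in
`a, b, c, κ` and `u = (1 + bc)/a`; since the bracket only sees germs, each `Yⱼ₊₁` is computed
from the explicit formula for `Yⱼ`. The matrix with rows `X, Y₀, …, Y₄` then has determinant
`9a(au − bc)² = 9a`, because `au − bc = 1`.
-/

open Matrix Topology

section FDeriv

variable {𝕜 : Type*} [NontriviallyNormedField 𝕜] {E F : Type*} [NormedAddCommGroup E]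
  [NormedSpace 𝕜 E] [NormedAddCommGroup F] [NormedSpace 𝕜 F] {x : E}

@[fun_prop]
theorem DifferentiableAt.vecCons {n : ℕ} {φ : E → F} {φs : E → Fin n → F}
    (h : DifferentiableAt 𝕜 φ x) (hs : DifferentiableAt 𝕜 φs x) :
    DifferentiableAt 𝕜 (fun x => vecCons (φ x) (φs x)) x :=
  h.finCons hs

theorem fderiv_vecCons_apply {n : ℕ} {φ : E → F} {φs : E → Fin n → F}
    (h : DifferentiableAt 𝕜 φ x) (hs : DifferentiableAt 𝕜 φs x) (v : E) :
    fderiv 𝕜 (fun x => vecCons (φ x) (φs x)) x v =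
      vecCons (fderiv 𝕜 φ x v) (fderiv 𝕜 φs x v) := by
  have hd : HasFDerivAt (fun x => vecCons (φ x) (φs x))
      ((fderiv 𝕜 φ x).finCons (fderiv 𝕜 φs x)) x :=
    h.hasFDerivAt.finCons hs.hasFDerivAt
  rw [hd.fderiv]
  rfl

@[simp]
theorem fderiv_apply_apply {ι : Type*} [Fintype ι] (i : ι) (p v : ι → 𝕜) :
    fderiv 𝕜 (fun q : ι → 𝕜 => q i) p v = v i := by
  rw [(hasFDerivAt_apply i p).fderiv]
  rfl

theorem fderiv_fun_div_apply {c d : E → 𝕜} (hc : DifferentiableAt 𝕜 c x)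
    (hd : DifferentiableAt 𝕜 d x) (hx : d x ≠ 0) (v : E) :
    fderiv 𝕜 (fun y => c y / d y) x v =
      (fderiv 𝕜 c x v * d x - c x * fderiv 𝕜 d x v) / d x ^ 2 := by
  have hinv : HasFDerivAt (fun y => (d y)⁻¹) (-(d x ^ 2)⁻¹ • fderiv 𝕜 d x) x :=
    (hasDerivAt_inv hx).comp_hasFDerivAt x hd.hasFDerivAt
  simp only [div_eq_mul_inv]
  rw [(hc.hasFDerivAt.fun_mul hinv).fderiv]
  simp only [_root_.add_apply, _root_.smul_apply, smul_eq_mul]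
  field_simp
  ring

end FDeriv

theorem Matrix.span_range_row_eq_top {R m : Type*} [CommRing R] [Fintype m] [DecidableEq m]
    {A : Matrix m m R} (hA : IsUnit A.det) : Submodule.span R (Set.range A.row) = ⊤ := by
  rw [← range_vecMulLinear, LinearMap.range_eq_top, coe_vecMulLinear]
  exact vecMul_surjective_iff_isUnit.2 ((isUnit_iff_isUnit_det A).2 hA)

theorem lieBr_eq_lieBracket : lieBr = VectorField.lieBracket ℝ := rfl

theorem fderiv_Xvf_apply {p : Fin 6 → ℝ} (hp : p 2 ≠ 0) (v : Fin 6 → ℝ) :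
    fderiv ℝ Xvf p v = ![v 2, v 4, v 3, p 5 * v 2 + p 2 * v 5,
      ((p 3 * v 4 + p 4 * v 3) * p 2 - (1 + p 3 * p 4) * v 2) / p 2 ^ 2, 0] := by
  unfold Xvf
  simp (disch := first | assumption | fun_prop (disch := assumption))
    [fderiv_vecCons_apply, fderiv_fun_mul, fderiv_fun_div_apply, ← zero_empty]

theorem Yvf_succ_apply_of_eqOn {j : ℕ} {W : (Fin 6 → ℝ) → Fin 6 → ℝ}
    (hW : Set.EqOn (Yvf j) W {q | q 2 ≠ 0}) {p : Fin 6 → ℝ} (hp : p 2 ≠ 0) :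
    Yvf (j + 1) p = fderiv ℝ W p (Xvf p) - fderiv ℝ Xvf p (W p) := by
  have hU : {q : Fin 6 → ℝ | q 2 ≠ 0} ∈ 𝓝 p :=
    (isOpen_ne_fun (continuous_apply 2) continuous_const).mem_nhds hp
  rw [Yvf, lieBr_eq_lieBracket,
    Filter.EventuallyEq.lieBracket_vectorField_eq .rfl (Filter.eventually_of_mem hU hW)]
  rfl

theorem Yvf_one_eqOn : Set.EqOn (Yvf 1) (fun q => ![0, 0, 0, -q 2, 0, 0]) {q | q 2 ≠ 0} := by
  intro p (hp : p 2 ≠ 0)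
  rw [Yvf_succ_apply_of_eqOn (W := Yvf 0) (Set.eqOn_refl _ _) hp, fderiv_Xvf_apply hp]
  ext i
  fin_cases i <;> simp [Yvf]

theorem Yvf_two_eqOn :
    Set.EqOn (Yvf 2) (fun q => ![0, 0, q 2, -q 3, q 4, 0]) {q | q 2 ≠ 0} := by
  intro p (hp : p 2 ≠ 0)
  rw [Yvf_succ_apply_of_eqOn Yvf_one_eqOn hp, fderiv_Xvf_apply hp]
  ext i
  fin_cases i <;> simp (disch := fun_prop) [fderiv_vecCons_apply, Xvf, ← zero_empty]
  field_simp

theorem Yvf_three_eqOn :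
    Set.EqOn (Yvf 3)
      (fun q => ![-q 2, -q 4, 2 * q 3, -(2 * (q 5 * q 2)), 2 * ((1 + q 3 * q 4) / q 2), 0])
      {q | q 2 ≠ 0} := by
  intro p (hp : p 2 ≠ 0)
  rw [Yvf_succ_apply_of_eqOn Yvf_two_eqOn hp, fderiv_Xvf_apply hp]
  ext i
  fin_cases i <;> simp (disch := fun_prop) [fderiv_vecCons_apply, Xvf, ← zero_empty]
    <;> field_simp <;> ring

theorem Yvf_four_eqOn :
    Set.EqOn (Yvf 4)
      (fun q => ![-(3 * q 3), -(3 * ((1 + q 3 * q 4) / q 2)), 4 * (q 5 * q 2),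
        -(4 * (q 5 * q 3)), 4 * (q 5 * q 4), 0])
      {q | q 2 ≠ 0} := by
  intro p (hp : p 2 ≠ 0)
  rw [Yvf_succ_apply_of_eqOn Yvf_three_eqOn hp, fderiv_Xvf_apply hp]
  ext i
  fin_cases i <;> simp (disch := first | assumption | fun_prop (disch := assumption))
    [fderiv_vecCons_apply, fderiv_fun_mul, fderiv_fun_div_apply, Xvf, ← zero_empty]
    <;> field_simp <;> ring

theorem det_bracket_frame (a b c κ u : ℝ) :
    !![a, c, b, κ * a, u, 0;
      0, 0, 0, 0, 0, 1;
      0, 0, 0, -a, 0, 0;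
      0, 0, a, -b, c, 0;
      -a, -c, 2 * b, -(2 * (κ * a)), 2 * u, 0;
      -(3 * b), -(3 * u), 4 * (κ * a), -(4 * (κ * b)), 4 * (κ * c), 0].det =
      9 * a * (a * u - b * c) ^ 2 := by
  simp +decide [det_succ_row_zero, Fin.sum_univ_succ, Fin.succAbove]
  ring

/-- At every point with `a ≠ 0`, the six vectors
`X(p), Y₀(p), Y₁(p), Y₂(p), Y₃(p), Y₄(p)` span `ℝ⁶`: the rank-2 distribution
`{X, ∂κ}` is bracket generating with derived length 4. -/
theorem cartan_prolongation_bracket_generating (p : Fin 6 → ℝ) (hp : p 2 ≠ 0) :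
    Submodule.span ℝ {Xvf p, Yvf 0 p, Yvf 1 p, Yvf 2 p, Yvf 3 p, Yvf 4 p} = ⊤ := by
  have hrows : ({Xvf p, Yvf 0 p, Yvf 1 p, Yvf 2 p, Yvf 3 p, Yvf 4 p} : Set (Fin 6 → ℝ)) =
      Set.range (Matrix.of ![Xvf p, Yvf 0 p, Yvf 1 p, Yvf 2 p, Yvf 3 p, Yvf 4 p]).row := by
    simp only [row_eq_self, Equiv.symm_apply_apply, range_cons, range_empty, Set.union_empty,
      Set.singleton_union]
  have hu : p 2 * ((1 + p 3 * p 4) / p 2) - p 3 * p 4 = 1 := by field_simp; ring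
  rw [hrows]
  refine Matrix.span_range_row_eq_top ?_
  rw [Yvf_one_eqOn hp, Yvf_two_eqOn hp, Yvf_three_eqOn hp, Yvf_four_eqOn hp]
  simp only [Xvf, Yvf]
  rw [det_bracket_frame, hu]
  simpa using hp
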